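/- arXiv:2412.10213 — 5 statements merged into one kernel-verified Lean document; each statement's English description precedes it below -/
import Mathlib

section
/- With rows of the design matrix X indexed by pairs (i,j) ∈ {1,…,N}×{1,…,K} and columns indexed by {1,…,K} ⊔ ({1,…,K}×{1,…,p}), where X[(i,j), j'] = x_{ij}·δ_{jj'} and X[(i,j), (j',k)] = Z_{ik}·δ_{jj'}, and with V the NK×NK matrix whose ((i,j),(i',j')) entry is δ_{ii'}·(τ² + δ_{jj'} σ_j²): if V, Xᵀ V⁻¹ X, and the matrix P(β̂) are all invertible, then the upper-left K×K block of (Xᵀ V⁻¹ X)⁻¹ equals P(β̂)⁻¹; that is, P(β̂) is the precision matrix of the generalized least squares treatment effect estimates β̂ = (β̂_1,…,β̂_K). -/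
/-!
The covariance is block diagonal, `V = 1 ⊗ W`, with the compound-symmetric within-subject
covariance `W = diag σ² + τ² J`, whose inverse is given by Sherman–Morrison. Ordering the
parameters as (treatment effects, covariate effects), `Xᵀ V⁻¹ X` has diagonal blocks
`W⁻¹ ⊙ x xᵀ` and `W⁻¹ ⊗ Zᵀ Z`, and off-diagonal blocks that are face-splitting products of
`W⁻¹` with `x Z`. The upper-left block of the inverse is the inverse of the Schur complement,
and since `W⁻¹ W = 1` the Schur complement collapses to `W⁻¹ ⊙ (x P_{Z⊥} xᵀ)`, which is
`P(β̂)` entry by entry.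
-/

open Matrix Finset
open scoped Kronecker

theorem diagonal_add_const_mul_eq_one {𝕜 κ : Type*} [Field 𝕜] [Fintype κ] [DecidableEq κ]
    {d : κ → 𝕜} (hd : ∀ j, d j ≠ 0) {t : 𝕜} (hc : 1 + t * ∑ j, (d j)⁻¹ ≠ 0) :
    (diagonal d + of fun _ _ => t) *
      (diagonal d⁻¹ - (t / (1 + t * ∑ j, (d j)⁻¹)) • vecMulVec d⁻¹ d⁻¹) = 1 := by
  ext i k
  simp only [mul_apply, Matrix.add_apply, diagonal_apply, of_apply, Matrix.sub_apply, Pi.inv_apply,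
    Matrix.smul_apply, vecMulVec_apply, smul_eq_mul, mul_sub, mul_ite, add_mul, ite_mul, zero_mul,
    mul_zero, sum_sub_distrib, sum_ite_eq', mem_univ, ↓reduceIte, sum_add_distrib, sum_ite_eq,
    ← mul_sum, ← sum_mul, one_apply]
  have := hd i
  generalize ∑ j, (d j)⁻¹ = s at hc ⊢
  split_ifs with hik
  · subst hik
    field_simp
    ring
  · field_simp
    ring

theorem diagonal_inv_sub_smul_vecMulVec_apply {𝕜 κ : Type*} [Field 𝕜] [DecidableEq κ]
    (d : κ → 𝕜) (t : 𝕜) {c : 𝕜} (hc : c ≠ 0) (j j' : κ) :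
    (diagonal d⁻¹ - (t / c) • vecMulVec d⁻¹ d⁻¹) j j' =
      1 / c * if j = j' then (d j)⁻¹ * (c - t * (d j)⁻¹) else -(t * (d j)⁻¹ * (d j')⁻¹) := by
  simp only [Matrix.sub_apply, diagonal_apply, Matrix.smul_apply, vecMulVec_apply, Pi.inv_apply,
    smul_eq_mul]
  split_ifs with hjj'
  · subst hjj'
    linear_combination -(d j)⁻¹ * one_div_mul_cancel hc
  · ring

section BlockInverse

variable {R : Type*} [CommRing R] {m n : Type*} [Fintype m] [Fintype n] [DecidableEq m]
  [DecidableEq n]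

/-- Junk values are consistent: when the Schur complement is singular, so is the block matrix,
and both inverses are `0`. -/
theorem inv_fromBlocks_toBlocks₁₁ (A : Matrix m m R) (B : Matrix m n R) (C : Matrix n m R)
    {D : Matrix n n R} (hD : IsUnit D.det) :
    (fromBlocks A B C D)⁻¹.toBlocks₁₁ = (A - B * D⁻¹ * C)⁻¹ := by
  have := D.invertibleOfIsUnitDet hD
  by_cases hS : IsUnit (A - B * D⁻¹ * C).det
  · have : Invertible (A - B * ⅟D * C) := by
      rw [invOf_eq_nonsing_inv]; exact (A - B * D⁻¹ * C).invertibleOfIsUnitDet hS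
    have := fromBlocks₂₂Invertible A B C D
    rw [← invOf_eq_nonsing_inv, invOf_fromBlocks₂₂_eq, toBlocks_fromBlocks₁₁,
      invOf_eq_nonsing_inv, invOf_eq_nonsing_inv]
  · have hM : ¬IsUnit (fromBlocks A B C D).det := by
      rw [det_fromBlocks₂₂, invOf_eq_nonsing_inv, IsUnit.mul_iff]
      exact fun h => hS h.2
    rw [nonsing_inv_apply_not_isUnit _ hM, nonsing_inv_apply_not_isUnit _ hS]
    rfl

end BlockInverse

section FaceSplit

variable {R : Type*} [CommRing R] {κ α β γ δ : Type*}

/-- The face-splitting (row-wise Kronecker) product. -/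
def faceSplit (S : Matrix κ α R) (Y : Matrix κ β R) : Matrix κ (α × β) R :=
  of fun ℓ c => S ℓ c.1 * Y ℓ c.2

@[simp]
theorem faceSplit_apply (S : Matrix κ α R) (Y : Matrix κ β R) (ℓ : κ) (c : α × β) :
    faceSplit S Y ℓ c = S ℓ c.1 * Y ℓ c.2 := rfl

theorem faceSplit_mul_kronecker [Fintype α] [Fintype β] (S : Matrix κ α R) (Y : Matrix κ β R)
    (W : Matrix α γ R) (H : Matrix β δ R) :
    faceSplit S Y * (W ⊗ₖ H) = faceSplit (S * W) (Y * H) := by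
  ext ℓ ⟨m, k⟩
  simp only [mul_apply, Fintype.sum_prod_type, faceSplit_apply, kroneckerMap_apply, sum_mul_sum]
  exact sum_congr rfl fun _ _ => sum_congr rfl fun _ _ => by ring

theorem faceSplit_one_mul_transpose_faceSplit [Fintype κ] [Fintype β] [DecidableEq κ]
    (S : Matrix κ κ R) (Y Y' : Matrix κ β R) :
    faceSplit (1 : Matrix κ κ R) Y * (faceSplit Sᵀ Y')ᵀ = S ⊙ (Y * Y'ᵀ) := by
  ext ℓ ℓ'
  simp only [mul_apply, Fintype.sum_prod_type, faceSplit_apply, transpose_apply, one_apply,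
    hadamard_apply, ite_mul, one_mul, zero_mul, mul_sum]
  rw [sum_comm]
  simp only [sum_ite_eq, mem_univ, if_true]
  exact sum_congr rfl fun _ _ => by ring

end FaceSplit

section Design

variable {R : Type*} [CommRing R] {ι κ α β : Type*} [Fintype ι] [Fintype κ] [DecidableEq ι]

theorem transpose_mul_one_kronecker_mul_apply (X : Matrix (ι × κ) α R) (S : Matrix κ κ R)
    (a b : α) :
    (Xᵀ * ((1 : Matrix ι ι R) ⊗ₖ S) * X) a b =
      ∑ i, ∑ j, ∑ j', X (i, j) a * S j j' * X (i, j') b := by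
  simp only [mul_apply, Fintype.sum_prod_type, transpose_apply, kroneckerMap_apply, one_apply,
    ite_mul, one_mul, zero_mul, mul_ite, mul_zero, sum_mul]
  refine sum_congr rfl fun i _ => ?_
  rw [sum_comm]
  simp only [sum_ite_irrel, sum_const_zero, sum_ite_eq', mem_univ, if_true]
  exact sum_comm

def treatmentDesign [DecidableEq κ] (x : κ → ι → R) (Z : Matrix ι β R) :
    Matrix (ι × κ) (κ ⊕ κ × β) R :=
  of fun r => Sum.elim (fun j => if r.2 = j then x r.2 r.1 else 0)
    fun c => if r.2 = c.1 then Z r.1 c.2 else 0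

theorem treatmentDesign_transpose_mul_one_kronecker_mul [Fintype β] [DecidableEq κ]
    (x : κ → ι → R) (Z : Matrix ι β R) (S : Matrix κ κ R) :
    (treatmentDesign x Z)ᵀ * ((1 : Matrix ι ι R) ⊗ₖ S) * treatmentDesign x Z =
      fromBlocks (S ⊙ (of x * (of x)ᵀ)) (faceSplit S (of x * Z)) (faceSplit Sᵀ (of x * Z))ᵀ
        (S ⊗ₖ (Zᵀ * Z)) := by
  ext (ℓ | ⟨m, k⟩) (ℓ' | ⟨m', k'⟩) <;>
    rw [transpose_mul_one_kronecker_mul_apply] <;>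
    simp only [treatmentDesign, of_apply, Sum.elim_inl, Sum.elim_inr, ite_mul, mul_ite,
      zero_mul, mul_zero, sum_ite_eq', mem_univ, if_true, fromBlocks_apply₁₁, fromBlocks_apply₁₂,
      fromBlocks_apply₂₁, fromBlocks_apply₂₂, hadamard_apply, faceSplit_apply, transpose_apply,
      kroneckerMap_apply, mul_apply, mul_sum] <;>
    exact sum_congr rfl fun _ _ => by ring

theorem treatmentDesign_inv_toBlocks₁₁ [Fintype β] [DecidableEq κ] [DecidableEq β]
    (x : κ → ι → R) (Z : Matrix ι β R) {W : Matrix κ κ R} (hW : IsUnit W.det)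
    (hZ : IsUnit (Zᵀ * Z).det) :
    ((treatmentDesign x Z)ᵀ * ((1 : Matrix ι ι R) ⊗ₖ W)⁻¹ * treatmentDesign x Z)⁻¹.toBlocks₁₁ =
      (W⁻¹ ⊙ (of x * (1 - Z * (Zᵀ * Z)⁻¹ * Zᵀ) * (of x)ᵀ))⁻¹ := by
  have hD : (W⁻¹ ⊗ₖ (Zᵀ * Z)) * (W ⊗ₖ (Zᵀ * Z)⁻¹) = 1 := by
    rw [← mul_kronecker_mul, nonsing_inv_mul _ hW, mul_nonsing_inv _ hZ, one_kronecker_one]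
  rw [inv_kronecker, inv_one, treatmentDesign_transpose_mul_one_kronecker_mul,
    inv_fromBlocks_toBlocks₁₁ _ _ _ (isUnit_det_of_right_inverse hD), inv_eq_right_inv hD,
    faceSplit_mul_kronecker, nonsing_inv_mul _ hW, faceSplit_one_mul_transpose_faceSplit]
  have hProj : of x * (1 - Z * (Zᵀ * Z)⁻¹ * Zᵀ) * (of x)ᵀ =
      of x * (of x)ᵀ - of x * Z * (Zᵀ * Z)⁻¹ * (of x * Z)ᵀ := by
    simp only [Matrix.mul_sub, Matrix.sub_mul, Matrix.mul_one, transpose_mul, Matrix.mul_assoc]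
  rw [hProj]
  congr 1
  ext
  simp only [Matrix.sub_apply, hadamard_apply, mul_sub]

end Design

theorem statement_0_general (N K p : ℕ)
    (τsq : ℝ) (hτ : 0 ≤ τsq) (σsq : Fin K → ℝ) (hσ : ∀ j, 0 < σsq j)
    (Z : Matrix (Fin N) (Fin p) ℝ) (hZ : IsUnit (Zᵀ * Z).det)
    (x : Fin K → Fin N → ℝ)
    (c : ℝ) (hc : c = 1 + τsq * ∑ ℓ, (σsq ℓ)⁻¹)
    (Q : Fin K → ℝ) (hQ : ∀ j, Q j = (σsq j)⁻¹ * (c - τsq * (σsq j)⁻¹))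
    (R : Fin K → Fin K → ℝ) (hR : ∀ j j', R j j' = -(τsq * (σsq j)⁻¹ * (σsq j')⁻¹))
    (P : Matrix (Fin K) (Fin K) ℝ)
    (hP : ∀ j j', P j j' = (1 / c) * (if j = j' then Q j else R j j') *
      (x j ⬝ᵥ ((1 - Z * (Zᵀ * Z)⁻¹ * Zᵀ) *ᵥ x j')))
    (X : Matrix (Fin N × Fin K) (Fin K ⊕ Fin K × Fin p) ℝ)
    (hX₁ : ∀ i j j', X (i, j) (Sum.inl j') = if j = j' then x j i else 0)
    (hX₂ : ∀ i j j' k, X (i, j) (Sum.inr (j', k)) = if j = j' then Z i k else 0)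
    (V : Matrix (Fin N × Fin K) (Fin N × Fin K) ℝ)
    (hV : ∀ i j i' j', V (i, j) (i', j') =
      if i = i' then τsq + (if j = j' then σsq j else 0) else 0) :
    ∀ j j' : Fin K, (Xᵀ * V⁻¹ * X)⁻¹ (Sum.inl j) (Sum.inl j') = P⁻¹ j j' := by
  have hσ₀ : ∀ j, σsq j ≠ 0 := fun j => (hσ j).ne'
  have hc₀ : 1 + τsq * ∑ ℓ, (σsq ℓ)⁻¹ ≠ 0 := by
    have : 0 ≤ τsq * ∑ ℓ, (σsq ℓ)⁻¹ :=
      mul_nonneg hτ (sum_nonneg fun ℓ _ => (inv_pos.mpr (hσ ℓ)).le)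
    exact ne_of_gt (by linarith)
  set W : Matrix (Fin K) (Fin K) ℝ := diagonal σsq + of fun _ _ => τsq
  have hWS := diagonal_add_const_mul_eq_one hσ₀ hc₀
  have hXdef : X = treatmentDesign x Z := by
    ext ⟨i, j⟩ (j' | ⟨j', k⟩) <;> simp [treatmentDesign, hX₁, hX₂]
  have hVdef : V = (1 : Matrix (Fin N) (Fin N) ℝ) ⊗ₖ W := by
    ext ⟨i, j⟩ ⟨i', j'⟩
    by_cases hi : i = i' <;> simp [hV, hi, W, diagonal_apply, add_comm]
  have hPdef : P = W⁻¹ ⊙ (of x * (1 - Z * (Zᵀ * Z)⁻¹ * Zᵀ) * (of x)ᵀ) := by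
    ext j j'
    rw [hP, hadamard_apply, inv_eq_right_inv hWS, ← hc,
      diagonal_inv_sub_smul_vecMulVec_apply _ _ (hc ▸ hc₀), hQ, hR, dotProduct_mulVec]
    rfl
  intro j j'
  rw [hXdef, hVdef, hPdef,
    ← treatmentDesign_inv_toBlocks₁₁ x Z (isUnit_det_of_right_inverse hWS) hZ]
  rfl

/-- With design matrix `X` (rows indexed by subject–experiment pairs, columns
by treatment effects `Fin K` and covariate effects `Fin K × Fin p`) and response covariance
matrix `V`, if `V`, `Xᵀ V⁻¹ X` and `P(β̂)` are invertible, then the upper-left K×K block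
of `(Xᵀ V⁻¹ X)⁻¹` equals `P(β̂)⁻¹`; i.e. `P(β̂)` is the precision matrix of the GLS
treatment effect estimates. -/
theorem statement_0 (N K p : ℕ) (hN : 1 ≤ N) (hK : 1 ≤ K)
    (τsq : ℝ) (hτ : 0 ≤ τsq) (σsq : Fin K → ℝ) (hσ : ∀ j, 0 < σsq j)
    (Z : Matrix (Fin N) (Fin p) ℝ) (hZ : IsUnit (Zᵀ * Z).det)
    (x : Fin K → Fin N → ℝ) (hx : ∀ j i, x j i = 1 ∨ x j i = -1)
    (c : ℝ) (hc : c = 1 + τsq * ∑ ℓ, (σsq ℓ)⁻¹)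
    (Q : Fin K → ℝ) (hQ : ∀ j, Q j = (σsq j)⁻¹ * (c - τsq * (σsq j)⁻¹))
    (R : Fin K → Fin K → ℝ) (hR : ∀ j j', R j j' = -(τsq * (σsq j)⁻¹ * (σsq j')⁻¹))
    (P : Matrix (Fin K) (Fin K) ℝ)
    (hP : ∀ j j', P j j' = (1 / c) * (if j = j' then Q j else R j j') *
      (x j ⬝ᵥ ((1 - Z * (Zᵀ * Z)⁻¹ * Zᵀ) *ᵥ x j')))
    (X : Matrix (Fin N × Fin K) (Fin K ⊕ Fin K × Fin p) ℝ)
    (hX₁ : ∀ i j j', X (i, j) (Sum.inl j') = if j = j' then x j i else 0)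
    (hX₂ : ∀ i j j' k, X (i, j) (Sum.inr (j', k)) = if j = j' then Z i k else 0)
    (V : Matrix (Fin N × Fin K) (Fin N × Fin K) ℝ)
    (hV : ∀ i j i' j', V (i, j) (i', j') =
      if i = i' then τsq + (if j = j' then σsq j else 0) else 0)
    (hVinv : IsUnit V.det)
    (hInfo : IsUnit (Xᵀ * V⁻¹ * X).det)
    (hPinv : IsUnit P.det) :
    ∀ j j' : Fin K, (Xᵀ * V⁻¹ * X)⁻¹ (Sum.inl j) (Sum.inl j') = P⁻¹ j j' :=
  statement_0_general N K p τsq hτ σsq hσ Z hZ x c hc Q hQ R hR P hP X hX₁ hX₂ V hV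
end

section
/- Worst-case covariate-balanced design: suppose σ_1 = … = σ_K = σ > 0 and τ² = bσ² with b > 0, and suppose all K allocations are equal to a single vector x ∈ {−1,1}^N satisfying Zᵀ x = 0. Then the precision matrix P(β̂) equals (N/(σ²(1+bK))) times the K×K matrix with diagonal entries 1 + b(K−1) and off-diagonal entries −b; equivalently, P(β̂) = (N/σ²) I_K − (N b/(σ²(1+bK))) 𝟙_K 𝟙_Kᵀ, where 𝟙_K is the all-ones vector in ℝ^K. -/
/-!
Since `Zᵀ x = 0`, the residual projection `P_{Z⊥}` fixes `x`, so every Gram entry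
`xᵀ P_{Z⊥} x` equals `xᵀ x = N`. With equal variances `c = 1 + bK`, and the coefficients
`Q_j / c` and `R_{j,j'} / c` become `(1 + b(K-1)) / (σ²(1+bK))` and `-b / (σ²(1+bK))`.
-/

open Matrix Finset

theorem Matrix.one_sub_mul_mul_transpose_mulVec_of_transpose_mulVec_eq_zero
    {m n R : Type*} [Fintype m] [Fintype n] [DecidableEq m] [CommRing R]
    (Z : Matrix m n R) (A : Matrix n n R) {v : m → R} (hv : Zᵀ *ᵥ v = 0) :
    (1 - Z * A * Zᵀ) *ᵥ v = v := by
  rw [sub_mulVec, one_mulVec, ← mulVec_mulVec, hv, mulVec_zero, sub_zero]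

theorem Matrix.dotProduct_self_of_sign {n R : Type*} [Fintype n] [Ring R] {v : n → R}
    (hv : ∀ i, v i = 1 ∨ v i = -1) : v ⬝ᵥ v = Fintype.card n := by
  have hsq : ∀ i, v i * v i = 1 := fun i => by rcases hv i with h | h <;> simp [h]
  simp [dotProduct, hsq]

theorem smul_one_sub_smul_allOnes_apply {n : ℕ} (N K σ b : ℝ) (hσ : σ ≠ 0)
    (hc : 1 + b * K ≠ 0) (j j' : Fin n) :
    ((N / σ ^ 2) • (1 : Matrix (Fin n) (Fin n) ℝ) -
        (N * b / (σ ^ 2 * (1 + b * K))) • Matrix.of (fun _ _ : Fin n => (1 : ℝ))) j j' =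
      (N / (σ ^ 2 * (1 + b * K))) * (if j = j' then 1 + b * (K - 1) else -b) := by
  by_cases h : j = j'
  · simp only [h, if_true, Matrix.sub_apply, Matrix.smul_apply, one_apply_eq, of_apply,
      smul_eq_mul]
    field_simp
    ring
  · simp only [h, if_false, Matrix.sub_apply, Matrix.smul_apply, one_apply_ne h, of_apply,
      smul_eq_mul]
    field_simp
    ring

theorem statement_4_general (N K p : ℕ)
    (σ b : ℝ) (hσ : 0 < σ) (hb : 0 < b)
    (τsq : ℝ) (hτ : τsq = b * σ ^ 2)
    (σsq : Fin K → ℝ) (hσsq : ∀ j, σsq j = σ ^ 2)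
    (Z : Matrix (Fin N) (Fin p) ℝ)
    (xv : Fin N → ℝ) (hxv : ∀ i, xv i = 1 ∨ xv i = -1)
    (hbal : Zᵀ *ᵥ xv = 0)
    (x : Fin K → Fin N → ℝ) (hx : ∀ j, x j = xv)
    (c : ℝ) (hc : c = 1 + τsq * ∑ ℓ, (σsq ℓ)⁻¹)
    (Q : Fin K → ℝ) (hQ : ∀ j, Q j = (σsq j)⁻¹ * (c - τsq * (σsq j)⁻¹))
    (R : Fin K → Fin K → ℝ) (hR : ∀ j j', R j j' = -(τsq * (σsq j)⁻¹ * (σsq j')⁻¹))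
    (P : Matrix (Fin K) (Fin K) ℝ)
    (hP : ∀ j j', P j j' = (1 / c) * (if j = j' then Q j else R j j') *
      (x j ⬝ᵥ ((1 - Z * (Zᵀ * Z)⁻¹ * Zᵀ) *ᵥ x j'))) :
    (∀ j j' : Fin K, P j j' = (N / (σ ^ 2 * (1 + b * K))) *
      (if j = j' then 1 + b * ((K : ℝ) - 1) else -b)) ∧
    P = ((N : ℝ) / σ ^ 2) • (1 : Matrix (Fin K) (Fin K) ℝ) -
      ((N : ℝ) * b / (σ ^ 2 * (1 + b * K))) • Matrix.of (fun _ _ : Fin K => (1 : ℝ)) := by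
  have hσ₀ : σ ≠ 0 := hσ.ne'
  have hc₀ : 1 + b * K ≠ 0 := by positivity
  have hc' : c = 1 + b * K := by
    simp only [hc, hσsq, hτ, sum_const, card_univ, Fintype.card_fin, nsmul_eq_mul]
    field_simp
  have hgram : ∀ j j', x j ⬝ᵥ ((1 - Z * (Zᵀ * Z)⁻¹ * Zᵀ) *ᵥ x j') = N := fun j j' => by
    rw [hx, hx, one_sub_mul_mul_transpose_mulVec_of_transpose_mulVec_eq_zero _ _ hbal,
      dotProduct_self_of_sign hxv, Fintype.card_fin]
  have hentry : ∀ j j' : Fin K, P j j' = (N / (σ ^ 2 * (1 + b * K))) *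
      (if j = j' then 1 + b * ((K : ℝ) - 1) else -b) := fun j j' => by
    rw [hP, hgram]
    split_ifs
    · rw [hQ, hσsq, hc', hτ]
      field_simp
      ring
    · rw [hR, hσsq, hσsq, hτ, hc']
      field_simp
  refine ⟨hentry, ext fun j j' => ?_⟩
  rw [hentry, smul_one_sub_smul_allOnes_apply _ _ _ _ hσ₀ hc₀]

/-- Worst-case covariate-balanced design. If `σ_j² = σ²` for all `j`,
`τ² = bσ²` with `b > 0`, and the same covariate-balancing allocation `x ∈ {−1,1}^N`
(with `Zᵀx = 0`) is used in all `K` experiments, then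
`P(β̂) = (N/(σ²(1+bK)))·M` where `M` has diagonal entries `1+b(K−1)` and off-diagonal
entries `−b`; equivalently `P(β̂) = (N/σ²) I_K − (Nb/(σ²(1+bK))) 𝟙𝟙ᵀ`. -/
theorem statement_4 (N K p : ℕ) (hN : 1 ≤ N) (hK : 1 ≤ K)
    (σ b : ℝ) (hσ : 0 < σ) (hb : 0 < b)
    (τsq : ℝ) (hτ : τsq = b * σ ^ 2)
    (σsq : Fin K → ℝ) (hσsq : ∀ j, σsq j = σ ^ 2)
    (Z : Matrix (Fin N) (Fin p) ℝ) (hZ : IsUnit (Zᵀ * Z).det)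
    (xv : Fin N → ℝ) (hxv : ∀ i, xv i = 1 ∨ xv i = -1)
    (hbal : Zᵀ *ᵥ xv = 0)
    (x : Fin K → Fin N → ℝ) (hx : ∀ j, x j = xv)
    (c : ℝ) (hc : c = 1 + τsq * ∑ ℓ, (σsq ℓ)⁻¹)
    (Q : Fin K → ℝ) (hQ : ∀ j, Q j = (σsq j)⁻¹ * (c - τsq * (σsq j)⁻¹))
    (R : Fin K → Fin K → ℝ) (hR : ∀ j j', R j j' = -(τsq * (σsq j)⁻¹ * (σsq j')⁻¹))
    (P : Matrix (Fin K) (Fin K) ℝ)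
    (hP : ∀ j j', P j j' = (1 / c) * (if j = j' then Q j else R j j') *
      (x j ⬝ᵥ ((1 - Z * (Zᵀ * Z)⁻¹ * Zᵀ) *ᵥ x j'))) :
    (∀ j j' : Fin K, P j j' = (N / (σ ^ 2 * (1 + b * K))) *
      (if j = j' then 1 + b * ((K : ℝ) - 1) else -b)) ∧
    P = ((N : ℝ) / σ ^ 2) • (1 : Matrix (Fin K) (Fin K) ℝ) -
      ((N : ℝ) * b / (σ ^ 2 * (1 + b * K))) • Matrix.of (fun _ _ : Fin K => (1 : ℝ)) :=
  statement_4_general N K p σ b hσ hb τsq hτ σsq hσsq Z xv hxv hbal x hx c hc Q hQ R hR P hP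
end

section
/- Under the best-case covariate-balanced design (σ_1 = … = σ_K = σ > 0, τ² = bσ² with b > 0, allocations x_j ∈ {−1,1}^N with Zᵀ x_j = 0 for all j and x_jᵀ x_{j'} = 0 for j ≠ j'), the precision matrix P(β̂) is invertible and its inverse (the covariance matrix of the treatment effect estimates) equals (σ²(1+bK)/(N(1+b(K−1)))) · I_K; in particular each individual treatment effect variance equals (σ²/N)·(1+bK)/(1+b(K−1)) = (σ²/N)·(1 + b/(1+b(K−1))). -/
/-!
Balance (`Zᵀ x_j = 0`) means the projection `P_{Z⊥}` fixes every `x_j`, so the entries of the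
precision matrix are weights times `x_jᵀ x_{j'}`. Orthogonality kills the off-diagonal entries
and `x_jᵀ x_j = N` for a `±1` vector; with equal variances `c = 1 + bK` and
`Q_j = (1 + b(K-1)) / σ²`, so `P = N(1 + b(K-1)) / (σ²(1 + bK)) • I`, whose inverse is read off.
-/

open Matrix Finset

namespace Matrix

variable {m n R : Type*} [Fintype m] [Fintype n]

theorem one_sub_mul_mul_transpose_mulVec_of_transpose_mulVec_eq_zero_s8 [Ring R]
    [DecidableEq m] (Z : Matrix m n R) (M : Matrix n n R) {v : m → R}
    (hv : Zᵀ *ᵥ v = 0) : (1 - Z * M * Zᵀ) *ᵥ v = v := by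
  rw [sub_mulVec, one_mulVec, ← mulVec_mulVec, hv, mulVec_zero, sub_zero]

theorem dotProduct_self_eq_card_of_sign [Ring R] {v : n → R}
    (hv : ∀ i, v i = 1 ∨ v i = -1) : v ⬝ᵥ v = Fintype.card n := by
  have hsq : ∀ i, v i * v i = 1 := fun i => by rcases hv i with h | h <;> simp [h]
  simp [dotProduct, hsq]

theorem inv_smul_one [DecidableEq n] [Field R] {d : R} (hd : d ≠ 0) :
    (d • (1 : Matrix n n R))⁻¹ = d⁻¹ • 1 :=
  inv_eq_right_inv (by simp [smul_smul, hd])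

end Matrix

theorem statement_8_general (N K p : ℕ) (hN : 1 ≤ N) (hK : 1 ≤ K)
    (σ b : ℝ) (hσ : 0 < σ) (hb : 0 < b)
    (τsq : ℝ) (hτ : τsq = b * σ ^ 2)
    (σsq : Fin K → ℝ) (hσsq : ∀ j, σsq j = σ ^ 2)
    (Z : Matrix (Fin N) (Fin p) ℝ)
    (x : Fin K → Fin N → ℝ) (hx : ∀ j i, x j i = 1 ∨ x j i = -1)
    (hbal : ∀ j, Zᵀ *ᵥ x j = 0)
    (horth : ∀ j j' : Fin K, j ≠ j' → x j ⬝ᵥ x j' = 0)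
    (c : ℝ) (hc : c = 1 + τsq * ∑ ℓ, (σsq ℓ)⁻¹)
    (Q : Fin K → ℝ) (hQ : ∀ j, Q j = (σsq j)⁻¹ * (c - τsq * (σsq j)⁻¹))
    (R : Fin K → Fin K → ℝ)
    (P : Matrix (Fin K) (Fin K) ℝ)
    (hP : ∀ j j', P j j' = (1 / c) * (if j = j' then Q j else R j j') *
      (x j ⬝ᵥ ((1 - Z * (Zᵀ * Z)⁻¹ * Zᵀ) *ᵥ x j'))) :
    IsUnit P.det ∧
    P⁻¹ = (σ ^ 2 * (1 + b * K) / ((N : ℝ) * (1 + b * ((K : ℝ) - 1)))) •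
      (1 : Matrix (Fin K) (Fin K) ℝ) ∧
    (∀ j : Fin K,
      P⁻¹ j j = (σ ^ 2 / (N : ℝ)) * ((1 + b * K) / (1 + b * ((K : ℝ) - 1))) ∧
      P⁻¹ j j = (σ ^ 2 / (N : ℝ)) * (1 + b / (1 + b * ((K : ℝ) - 1)))) := by
  have hK1 : (1 : ℝ) ≤ K := by exact_mod_cast hK
  have hN0 : (0 : ℝ) < N := by exact_mod_cast hN
  have hbK : 0 < 1 + b * ((K : ℝ) - 1) := by nlinarith
  have hc' : c = 1 + b * K := by
    simp only [hc, hτ, hσsq, sum_const, card_univ, Fintype.card_fin, nsmul_eq_mul]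
    field_simp
  have hQ' : ∀ j, Q j = (1 + b * ((K : ℝ) - 1)) / σ ^ 2 := fun j => by
    rw [hQ, hσsq, hc', hτ]; field_simp; ring
  set d := (N : ℝ) * (1 + b * ((K : ℝ) - 1)) / (σ ^ 2 * (1 + b * K)) with hd
  have hd0 : d ≠ 0 := by positivity
  have hPd : P = d • (1 : Matrix (Fin K) (Fin K) ℝ) := by
    ext j j'
    rw [hP, one_sub_mul_mul_transpose_mulVec_of_transpose_mulVec_eq_zero_s8 _ _ (hbal j')]
    rcases eq_or_ne j j' with rfl | hne
    · simp only [if_true, Matrix.smul_apply, one_apply_eq, smul_eq_mul, mul_one,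
        dotProduct_self_eq_card_of_sign (hx j), Fintype.card_fin, hQ', hc', hd]
      field_simp
    · simp [horth j j' hne, hne]
  have hinv : P⁻¹ = d⁻¹ • 1 := by rw [hPd, inv_smul_one hd0]
  have hdinv : d⁻¹ = σ ^ 2 * (1 + b * K) / ((N : ℝ) * (1 + b * ((K : ℝ) - 1))) := inv_div _ _
  have hentry : ∀ j, P⁻¹ j j = d⁻¹ := fun j => by simp [hinv]
  refine ⟨?_, hinv.trans (by rw [hdinv]), fun j => ⟨?_, ?_⟩⟩
  · simp [hPd, hd0]
  · rw [hentry, hdinv]; field_simp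
  · rw [hentry, hdinv]; field_simp; ring

/-- Under the best-case covariate-balanced design, the precision matrix
`P(β̂)` is invertible with inverse (the covariance matrix of the treatment effect
estimates) `(σ²(1+bK)/(N(1+b(K−1)))) I_K`; in particular each individual treatment effect
variance equals `(σ²/N)(1+bK)/(1+b(K−1)) = (σ²/N)(1 + b/(1+b(K−1)))`. -/
theorem statement_8 (N K p : ℕ) (hN : 1 ≤ N) (hK : 1 ≤ K)
    (σ b : ℝ) (hσ : 0 < σ) (hb : 0 < b)
    (τsq : ℝ) (hτ : τsq = b * σ ^ 2)
    (σsq : Fin K → ℝ) (hσsq : ∀ j, σsq j = σ ^ 2)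
    (Z : Matrix (Fin N) (Fin p) ℝ) (hZ : IsUnit (Zᵀ * Z).det)
    (x : Fin K → Fin N → ℝ) (hx : ∀ j i, x j i = 1 ∨ x j i = -1)
    (hbal : ∀ j, Zᵀ *ᵥ x j = 0)
    (horth : ∀ j j' : Fin K, j ≠ j' → x j ⬝ᵥ x j' = 0)
    (c : ℝ) (hc : c = 1 + τsq * ∑ ℓ, (σsq ℓ)⁻¹)
    (Q : Fin K → ℝ) (hQ : ∀ j, Q j = (σsq j)⁻¹ * (c - τsq * (σsq j)⁻¹))
    (R : Fin K → Fin K → ℝ) (hR : ∀ j j', R j j' = -(τsq * (σsq j)⁻¹ * (σsq j')⁻¹))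
    (P : Matrix (Fin K) (Fin K) ℝ)
    (hP : ∀ j j', P j j' = (1 / c) * (if j = j' then Q j else R j j') *
      (x j ⬝ᵥ ((1 - Z * (Zᵀ * Z)⁻¹ * Zᵀ) *ᵥ x j'))) :
    IsUnit P.det ∧
    P⁻¹ = (σ ^ 2 * (1 + b * K) / ((N : ℝ) * (1 + b * ((K : ℝ) - 1)))) •
      (1 : Matrix (Fin K) (Fin K) ℝ) ∧
    (∀ j : Fin K,
      P⁻¹ j j = (σ ^ 2 / (N : ℝ)) * ((1 + b * K) / (1 + b * ((K : ℝ) - 1))) ∧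
      P⁻¹ j j = (σ ^ 2 / (N : ℝ)) * (1 + b / (1 + b * ((K : ℝ) - 1)))) :=
  statement_8_general N K p hN hK σ b hσ hb τsq hτ σsq hσsq Z x hx hbal horth c hc Q hQ R P hP
end

section
/- Let N ≥ 1 and K ≥ 1 be natural numbers, b > 0 a real number, and x_1, …, x_K ∈ {−1,1}^N. Then det( I_N − (b/((1+bK)N)) Σ_{j=1}^K x_j x_jᵀ ) ≥ 1/(1+bK). -/
/-!
The matrix `A = (b / ((1 + bK)N)) Σ_j x_j x_jᵀ` is positive semidefinite with trace
`bK / (1 + bK) ≤ 1`, because each `x_j x_jᵀ` has trace `‖x_j‖² = N`. Writing `λ_i ∈ [0, 1]` for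
its eigenvalues, `det (1 - A) = ∏ (1 - λ_i) ≥ 1 - Σ λ_i = 1 - tr A = 1 / (1 + bK)` by the
Weierstrass product inequality.
-/

open Matrix Finset

theorem Finset.one_sub_sum_le_prod_one_sub {ι R : Type*} [CommRing R] [LinearOrder R]
    [IsStrictOrderedRing R] (s : Finset ι) {f : ι → R} (h0 : ∀ i ∈ s, 0 ≤ f i)
    (h1 : ∀ i ∈ s, f i ≤ 1) : 1 - ∑ i ∈ s, f i ≤ ∏ i ∈ s, (1 - f i) := by
  induction s using Finset.cons_induction with
  | empty => simp
  | cons a s ha ih =>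
    rw [sum_cons, prod_cons]
    have hsum : 0 ≤ ∑ i ∈ s, f i := sum_nonneg fun i hi => h0 i (mem_cons_of_mem hi)
    have hprod := ih (fun i hi => h0 i (mem_cons_of_mem hi)) (fun i hi => h1 i (mem_cons_of_mem hi))
    have ha0 := h0 a (mem_cons_self a s)
    have ha1 := h1 a (mem_cons_self a s)
    nlinarith [mul_le_mul_of_nonneg_left hprod (sub_nonneg.mpr ha1)]

theorem Matrix.dotProduct_self_eq_card {n R : Type*} [Fintype n] [NonAssocSemiring R]
    {v : n → R} (hv : ∀ i, v i * v i = 1) : v ⬝ᵥ v = Fintype.card n := by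
  simp [dotProduct, hv]

theorem Matrix.IsHermitian.det_one_sub {n 𝕜 : Type*} [Fintype n] [DecidableEq n] [RCLike 𝕜]
    {A : Matrix n n 𝕜} (hA : A.IsHermitian) :
    (1 - A).det = ∏ i, (1 - (hA.eigenvalues i : 𝕜)) := by
  have := congrArg (Polynomial.eval 1) hA.charpoly_eq
  rw [Matrix.charpoly, charmatrix, eval_det] at this
  simpa [Polynomial.eval_prod] using this

theorem Matrix.PosSemidef.one_sub_trace_le_det_one_sub {n : Type*} [Fintype n] [DecidableEq n]
    {A : Matrix n n ℝ} (hA : A.PosSemidef) (htr : A.trace ≤ 1) : 1 - A.trace ≤ (1 - A).det := by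
  have htr_eq : A.trace = ∑ i, hA.isHermitian.eigenvalues i := by
    simpa using hA.isHermitian.trace_eq_sum_eigenvalues
  have hnonneg : ∀ i ∈ univ, 0 ≤ hA.isHermitian.eigenvalues i :=
    fun i _ => hA.eigenvalues_nonneg i
  rw [hA.isHermitian.det_one_sub, htr_eq]
  refine univ.one_sub_sum_le_prod_one_sub hnonneg fun i hi => ?_
  exact (single_le_sum hnonneg hi).trans (htr_eq ▸ htr)

theorem statement_15_general (N K : ℕ) (hN : 1 ≤ N)
    (b : ℝ) (hb : 0 < b)
    (x : Fin K → Fin N → ℝ) (hx : ∀ j i, x j i = 1 ∨ x j i = -1) :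
    ((1 : Matrix (Fin N) (Fin N) ℝ) -
      (b / ((1 + b * K) * N)) • ∑ j : Fin K, vecMulVec (x j) (x j)).det ≥
      1 / (1 + b * K) := by
  have hNpos : (0 : ℝ) < N := by exact_mod_cast hN
  have hden : 0 < 1 + b * K := by positivity
  have hpsd : (∑ j : Fin K, vecMulVec (x j) (x j)).PosSemidef :=
    posSemidef_sum _ fun j _ => by simpa using posSemidef_vecMulVec_self_star (x j)
  have hsq : ∀ j i, x j i * x j i = 1 := fun j i => by rcases hx j i with h | h <;> simp [h]
  have htr : ((b / ((1 + b * K) * N)) • ∑ j : Fin K, vecMulVec (x j) (x j)).trace =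
      b * K / (1 + b * K) := by
    simp only [trace_smul, trace_sum, trace_vecMulVec, dotProduct_self_eq_card (hsq _),
      sum_const, card_univ, Fintype.card_fin, nsmul_eq_mul, smul_eq_mul]
    field_simp
  have hle := (hpsd.smul (div_pos hb (mul_pos hden hNpos)).le).one_sub_trace_le_det_one_sub
    (htr ▸ (div_le_one hden).2 (by linarith))
  rw [htr] at hle
  calc 1 / (1 + b * K) = 1 - b * K / (1 + b * K) := by field_simp; ring
    _ ≤ _ := hle

/-- Ostrowski-type lower bound. For allocations `x_1,…,x_K ∈ {−1,1}^N` and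
`b > 0`, `det(I_N − (b/((1+bK)N)) Σ_j x_j x_jᵀ) ≥ 1/(1+bK)`. -/
theorem statement_15 (N K : ℕ) (hN : 1 ≤ N) (hK : 1 ≤ K)
    (b : ℝ) (hb : 0 < b)
    (x : Fin K → Fin N → ℝ) (hx : ∀ j i, x j i = 1 ∨ x j i = -1) :
    ((1 : Matrix (Fin N) (Fin N) ℝ) -
      (b / ((1 + b * K) * N)) • ∑ j : Fin K, vecMulVec (x j) (x j)).det ≥
      1 / (1 + b * K) :=
  statement_15_general N K hN b hb x hx
end

section
/- If the precision matrix P(β̂) is positive semidefinite, then det(P(β̂)) ≤ Π_{j=1}^K (1/c) Q_j (x_jᵀ P_{Z⊥} x_j) ≤ (N/c)^K Π_{j=1}^K Q_j; in particular the D-efficiency det(P(β̂))^{1/K} is at most ((N/c)^K Π_{j=1}^K Q_j)^{1/K}, the Hadamard-based upper bound attained only under perfect covariate balancing within experiments and perfect orthogonality across experiments. -/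
open Matrix Finset
open scoped MatrixOrder

/-!
Since `P` is positive semidefinite, Hadamard's inequality bounds `det P` by the product of its
diagonal entries `(1/c) Q_j xⱼᵀ P_{Z⊥} xⱼ`. Hadamard's inequality itself follows by rescaling to
unit diagonal, where the eigenvalues are nonnegative with sum equal to the dimension, so AM-GM
bounds their product by `1`. Finally `P_{Z⊥}` is an orthogonal projection, so
`0 ≤ xᵀ P_{Z⊥} x ≤ xᵀ x = N` for `x ∈ {±1}ᴺ`.
-/

theorem Real.prod_le_one_of_sum_eq_card {ι : Type*} [Fintype ι] {μ : ι → ℝ}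
    (hμ : ∀ i, 0 ≤ μ i) (hsum : ∑ i, μ i = Fintype.card ι) : ∏ i, μ i ≤ 1 := by
  cases isEmpty_or_nonempty ι
  · simp
  have hcard : (0 : ℝ) < Fintype.card ι := by exact_mod_cast Fintype.card_pos
  have amgm := Real.geom_mean_le_arith_mean univ (fun _ ↦ 1) μ (by simp)
    (by simpa using hcard) (fun i _ ↦ hμ i)
  simp only [Real.rpow_one, one_mul, sum_const, card_univ, nsmul_eq_mul, mul_one, hsum,
    div_self hcard.ne'] at amgm
  rwa [Real.rpow_inv_le_iff_of_pos (prod_nonneg fun i _ ↦ hμ i) zero_le_one hcard,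
    Real.one_rpow] at amgm

namespace Matrix

variable {n : Type*} [Fintype n]

section Hadamard

variable [DecidableEq n]

theorem PosSemidef.det_le_one_of_diag_eq_one {A : Matrix n n ℝ} (hA : A.PosSemidef)
    (hdiag : ∀ i, A i i = 1) : A.det ≤ 1 := by
  have htrace : ∑ i, hA.isHermitian.eigenvalues i = Fintype.card n := by
    simpa [trace, hdiag] using hA.isHermitian.trace_eq_sum_eigenvalues.symm
  simpa [hA.isHermitian.det_eq_prod_eigenvalues] using
    Real.prod_le_one_of_sum_eq_card hA.eigenvalues_nonneg htrace

theorem PosSemidef.apply_eq_zero_of_diag_eq_zero {A : Matrix n n ℝ} (hA : A.PosSemidef)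
    {i : n} (hi : A i i = 0) (j : n) : A j i = 0 := by
  have hcol : A *ᵥ Pi.single i 1 = 0 :=
    (hA.dotProduct_mulVec_zero_iff _).1 (by simpa using hi)
  simpa using congrFun hcol j

theorem PosSemidef.det_le_prod_diag {A : Matrix n n ℝ} (hA : A.PosSemidef) :
    A.det ≤ ∏ i, A i i := by
  by_cases hzero : ∃ i, A i i = 0
  · obtain ⟨i, hi⟩ := hzero
    rw [det_eq_zero_of_column_eq_zero i (hA.apply_eq_zero_of_diag_eq_zero hi)]
    exact (prod_eq_zero (f := fun j ↦ A j j) (mem_univ i) hi).ge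
  push Not at hzero
  have hpos : ∀ i, 0 < A i i := fun i ↦ (hA.diag_nonneg (i := i)).lt_of_ne' (hzero i)
  set D := diagonal fun i ↦ (√(A i i))⁻¹
  have hB : (D * A * D).PosSemidef := by
    simpa [D, diagonal_conjTranspose] using hA.mul_mul_conjTranspose_same D
  have hdiagB : ∀ i, (D * A * D) i i = 1 := fun i ↦ by
    simp only [D, mul_diagonal, diagonal_mul]
    field_simp
    rw [Real.sq_sqrt (hpos i).le, div_self (hpos i).ne']
  have hdetB : (D * A * D).det = A.det / ∏ i, A i i := by
    have hD : D.det * D.det = (∏ i, A i i)⁻¹ := by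
      rw [det_diagonal, ← prod_mul_distrib, ← prod_inv_distrib]
      exact prod_congr rfl fun i _ ↦ by rw [← mul_inv, Real.mul_self_sqrt (hpos i).le]
    rw [det_mul, det_mul, div_eq_mul_inv, ← hD]
    ring
  rw [← div_le_one (prod_pos fun i _ ↦ hpos i), ← hdetB]
  exact hB.det_le_one_of_diag_eq_one hdiagB

end Hadamard

theorem isStarProjection_mul_inv_mul_transpose {m n : Type*} [Fintype m] [Fintype n]
    [DecidableEq n] (Z : Matrix m n ℝ) (hZ : IsUnit (Zᵀ * Z).det) :
    IsStarProjection (Z * (Zᵀ * Z)⁻¹ * Zᵀ) where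
  isIdempotentElem := by
    change _ * _ = _
    calc Z * (Zᵀ * Z)⁻¹ * Zᵀ * (Z * (Zᵀ * Z)⁻¹ * Zᵀ)
        = Z * ((Zᵀ * Z)⁻¹ * (Zᵀ * Z)) * (Zᵀ * Z)⁻¹ * Zᵀ := by simp only [Matrix.mul_assoc]
      _ = Z * (Zᵀ * Z)⁻¹ * Zᵀ := by rw [nonsing_inv_mul _ hZ, Matrix.mul_one]
  isSelfAdjoint := by
    simp [IsSelfAdjoint, star_eq_conjTranspose, transpose_nonsing_inv, Matrix.mul_assoc]

theorem IsStarProjection.dotProduct_mulVec_nonneg {W : Matrix n n ℝ} (hW : IsStarProjection W)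
    (v : n → ℝ) : 0 ≤ v ⬝ᵥ W *ᵥ v := by
  simpa using hW.nonneg.posSemidef.dotProduct_mulVec_nonneg v

theorem IsStarProjection.dotProduct_mulVec_le [DecidableEq n] {W : Matrix n n ℝ}
    (hW : IsStarProjection W) (v : n → ℝ) : v ⬝ᵥ W *ᵥ v ≤ v ⬝ᵥ v := by
  have := hW.one_sub.dotProduct_mulVec_nonneg v
  rwa [sub_mulVec, one_mulVec, dotProduct_sub, sub_nonneg] at this

end Matrix

theorem dotProduct_self_eq_card_of_forall_eq_one_or_neg_one {R n : Type*} [Fintype n]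
    [CommRing R] {v : n → R} (hv : ∀ i, v i = 1 ∨ v i = -1) : v ⬝ᵥ v = Fintype.card n := by
  have hsq : ∀ i, v i * v i = 1 := fun i ↦ by rcases hv i with h | h <;> simp [h]
  simp [dotProduct, hsq]

theorem statement_18_general (N K p : ℕ)
    (τsq : ℝ) (hτ : 0 ≤ τsq) (σsq : Fin K → ℝ) (hσ : ∀ j, 0 < σsq j)
    (Z : Matrix (Fin N) (Fin p) ℝ) (hZ : IsUnit (Zᵀ * Z).det)
    (x : Fin K → Fin N → ℝ) (hx : ∀ j i, x j i = 1 ∨ x j i = -1)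
    (c : ℝ) (hc : c = 1 + τsq * ∑ ℓ, (σsq ℓ)⁻¹)
    (Q : Fin K → ℝ) (hQ : ∀ j, Q j = (σsq j)⁻¹ * (c - τsq * (σsq j)⁻¹))
    (R : Fin K → Fin K → ℝ)
    (P : Matrix (Fin K) (Fin K) ℝ)
    (hP : ∀ j j', P j j' = (1 / c) * (if j = j' then Q j else R j j') *
      (x j ⬝ᵥ ((1 - Z * (Zᵀ * Z)⁻¹ * Zᵀ) *ᵥ x j')))
    (hPsd : P.PosSemidef) :
    P.det ≤ ∏ j : Fin K, (1 / c) * Q j *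
        (x j ⬝ᵥ ((1 - Z * (Zᵀ * Z)⁻¹ * Zᵀ) *ᵥ x j)) ∧
    (∏ j : Fin K, (1 / c) * Q j *
        (x j ⬝ᵥ ((1 - Z * (Zᵀ * Z)⁻¹ * Zᵀ) *ᵥ x j))) ≤
      ((N : ℝ) / c) ^ K * ∏ j : Fin K, Q j ∧
    P.det ^ ((1 : ℝ) / K) ≤
      (((N : ℝ) / c) ^ K * ∏ j : Fin K, Q j) ^ ((1 : ℝ) / K) := by
  have hinv : ∀ ℓ, 0 ≤ (σsq ℓ)⁻¹ := fun ℓ ↦ (inv_pos.2 (hσ ℓ)).le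
  have hc_pos : 0 < c := by
    have : 0 ≤ ∑ ℓ, (σsq ℓ)⁻¹ := sum_nonneg fun ℓ _ ↦ hinv ℓ
    rw [hc]; linarith [mul_nonneg hτ this]
  have hcQ : ∀ j, 0 ≤ (1 / c) * Q j := fun j ↦ by
    have := mul_le_mul_of_nonneg_left (single_le_sum (fun ℓ _ ↦ hinv ℓ) (mem_univ j)) hτ
    rw [hQ]
    exact mul_nonneg (by positivity) (mul_nonneg (hinv j) (by rw [hc]; linarith))
  set W := 1 - Z * (Zᵀ * Z)⁻¹ * Zᵀ
  have hW : IsStarProjection W := (isStarProjection_mul_inv_mul_transpose Z hZ).one_sub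
  have hdet : P.det ≤ ∏ j, (1 / c) * Q j * (x j ⬝ᵥ W *ᵥ x j) :=
    hPsd.det_le_prod_diag.trans_eq (prod_congr rfl fun j _ ↦ by simp [hP])
  have hprod : ∏ j, (1 / c) * Q j * (x j ⬝ᵥ W *ᵥ x j) ≤ ((N : ℝ) / c) ^ K * ∏ j, Q j :=
    calc ∏ j, (1 / c) * Q j * (x j ⬝ᵥ W *ᵥ x j)
        ≤ ∏ j, (1 / c) * Q j * (x j ⬝ᵥ x j) :=
          prod_le_prod (fun j _ ↦ mul_nonneg (hcQ j) (hW.dotProduct_mulVec_nonneg _))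
            fun j _ ↦ mul_le_mul_of_nonneg_left (hW.dotProduct_mulVec_le _) (hcQ j)
      _ = ∏ j, (N : ℝ) / c * Q j := prod_congr rfl fun j _ ↦ by
          rw [dotProduct_self_eq_card_of_forall_eq_one_or_neg_one (hx j), Fintype.card_fin]
          ring
      _ = ((N : ℝ) / c) ^ K * ∏ j, Q j := by
          rw [prod_mul_distrib, prod_const, card_univ, Fintype.card_fin]
  exact ⟨hdet, hprod, Real.rpow_le_rpow hPsd.det_nonneg (hdet.trans hprod) (by positivity)⟩

/-- Hadamard-based upper bound. If the precision matrix `P(β̂)` is positive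
semidefinite, then `det P(β̂) ≤ Π_j (1/c) Q_j (x_jᵀ P_{Z⊥} x_j) ≤ (N/c)^K Π_j Q_j`; in
particular the D-efficiency `det(P(β̂))^{1/K}` is at most `((N/c)^K Π_j Q_j)^{1/K}`. -/
theorem statement_18 (N K p : ℕ) (hN : 1 ≤ N) (hK : 1 ≤ K)
    (τsq : ℝ) (hτ : 0 ≤ τsq) (σsq : Fin K → ℝ) (hσ : ∀ j, 0 < σsq j)
    (Z : Matrix (Fin N) (Fin p) ℝ) (hZ : IsUnit (Zᵀ * Z).det)
    (x : Fin K → Fin N → ℝ) (hx : ∀ j i, x j i = 1 ∨ x j i = -1)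
    (c : ℝ) (hc : c = 1 + τsq * ∑ ℓ, (σsq ℓ)⁻¹)
    (Q : Fin K → ℝ) (hQ : ∀ j, Q j = (σsq j)⁻¹ * (c - τsq * (σsq j)⁻¹))
    (R : Fin K → Fin K → ℝ) (hR : ∀ j j', R j j' = -(τsq * (σsq j)⁻¹ * (σsq j')⁻¹))
    (P : Matrix (Fin K) (Fin K) ℝ)
    (hP : ∀ j j', P j j' = (1 / c) * (if j = j' then Q j else R j j') *
      (x j ⬝ᵥ ((1 - Z * (Zᵀ * Z)⁻¹ * Zᵀ) *ᵥ x j')))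
    (hPsd : P.PosSemidef) :
    P.det ≤ ∏ j : Fin K, (1 / c) * Q j *
        (x j ⬝ᵥ ((1 - Z * (Zᵀ * Z)⁻¹ * Zᵀ) *ᵥ x j)) ∧
    (∏ j : Fin K, (1 / c) * Q j *
        (x j ⬝ᵥ ((1 - Z * (Zᵀ * Z)⁻¹ * Zᵀ) *ᵥ x j))) ≤
      ((N : ℝ) / c) ^ K * ∏ j : Fin K, Q j ∧
    P.det ^ ((1 : ℝ) / K) ≤
      (((N : ℝ) / c) ^ K * ∏ j : Fin K, Q j) ^ ((1 : ℝ) / K) :=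
  statement_18_general N K p τsq hτ σsq hσ Z hZ x hx c hc Q hQ R P hP hPsd
end
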